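/- Let q, N, n be nonnegative integers. Then for all x ∈ [0,1], |R_{N,n}(x)| ≤ C(n+N+q, n), where C(a,b) denotes the binomial coefficient. -/

import Mathlib

/-! Substituting `u = x ^ 2 - 1 ∈ [-1, 0]` and regrouping by Vandermonde's identity gives
`R_{N,n}(x) = x ^ N * Q(u)` with `Q(u) = ∑ j, C(n, j) * C(n + b + j, j) * u ^ j`, `b = N + q`,
a Jacobi polynomial. `Q` satisfies `u (u + 1) Q'' + (1 + (b + 2) u) Q' = λ Q` with
`λ = n (n + b + 1)`, so Sonine's energy `λ Q² - u (1 + u) Q'²` has derivative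
`Q'² (1 + (2 b + 2) u)`: it first decreases, then increases, and is bounded on `[-1, 0]` by its
endpoint values `λ Q(-1)² = λ C(n + b, n)²` and `λ Q(0)² = λ`. As the energy dominates `λ Q²`
on `[-1, 0]`, `|Q| ≤ C(n + b, n)` there. -/

open Finset

/-- The radial Zernike polynomial `R_{N,n}` in dimension `p + 2` with `p = 2q`. -/
noncomputable def zernikeR (q N n : ℕ) (x : ℝ) : ℝ :=
  x ^ N * ∑ k ∈ Finset.range (n + 1),
    (-1 : ℝ) ^ k * (Nat.choose (n + N + q) k : ℝ) * (Nat.choose n k : ℝ) *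
      x ^ (2 * (n - k)) * (1 - x ^ 2) ^ k

theorem le_max_of_hasDerivAt_of_sign {g g' : ℝ → ℝ} {a c m u : ℝ}
    (hg : ∀ v, HasDerivAt g (g' v) v) (hneg : ∀ v < m, g' v ≤ 0) (hpos : ∀ v, m < v → 0 ≤ g' v)
    (hu : u ∈ Set.Icc a c) : g u ≤ max (g a) (g c) := by
  have hcont : Continuous g := continuous_iff_continuousAt.2 fun v ↦ (hg v).continuousAt
  have hdiff : Differentiable ℝ g := fun v ↦ (hg v).differentiableAt
  rcases le_or_gt u m with hum | hmu
  · have hanti : AntitoneOn g (Set.Icc a u) :=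
      antitoneOn_of_deriv_nonpos (convex_Icc a u) hcont.continuousOn hdiff.differentiableOn
        fun v hv ↦ by
          rw [interior_Icc] at hv
          rw [(hg v).deriv]
          exact hneg v (hv.2.trans_le hum)
    exact le_max_of_le_left (hanti (Set.left_mem_Icc.2 hu.1) (Set.right_mem_Icc.2 hu.1) hu.1)
  · have hmono : MonotoneOn g (Set.Icc u c) :=
      monotoneOn_of_deriv_nonneg (convex_Icc u c) hcont.continuousOn hdiff.differentiableOn
        fun v hv ↦ by
          rw [interior_Icc] at hv
          rw [(hg v).deriv]
          exact hpos v (hmu.trans hv.1)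
    exact le_max_of_le_right (hmono (Set.left_mem_Icc.2 hu.2) (Set.right_mem_Icc.2 hu.2) hu.2)

theorem sq_le_max_sq_of_jacobi_ode {f f' f'' : ℝ → ℝ} {b lam u : ℝ}
    (hf : ∀ v, HasDerivAt f (f' v) v) (hf' : ∀ v, HasDerivAt f' (f'' v) v)
    (hode : ∀ v, v * (v + 1) * f'' v + (1 + (b + 2) * v) * f' v = lam * f v)
    (hb : -1 < b) (hlam : 0 < lam) (hu : u ∈ Set.Icc (-1) 0) :
    f u ^ 2 ≤ max (f (-1) ^ 2) (f 0 ^ 2) := by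
  set g : ℝ → ℝ := fun v ↦ lam * f v ^ 2 - v * (1 + v) * f' v ^ 2
  have hg : ∀ v, HasDerivAt g (f' v ^ 2 * (1 + (2 * b + 2) * v)) v := by
    intro v
    have h := (((hf v).fun_pow 2).const_mul lam).fun_sub
      (((hasDerivAt_id' v).fun_mul ((hasDerivAt_const v 1).fun_add (hasDerivAt_id' v))).fun_mul
        ((hf' v).fun_pow 2))
    refine h.congr_deriv ?_
    linear_combination (-2 * f' v) * hode v
  have hc : 0 < 2 * b + 2 := by linarith
  have hgu : g u ≤ max (g (-1)) (g 0) := by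
    refine le_max_of_hasDerivAt_of_sign hg (m := -1 / (2 * b + 2)) (fun v hv ↦ ?_)
      (fun v hv ↦ ?_) hu
    · rw [lt_div_iff₀ hc] at hv
      exact mul_nonpos_of_nonneg_of_nonpos (sq_nonneg _) (by linarith)
    · rw [div_lt_iff₀ hc] at hv
      exact mul_nonneg (sq_nonneg _) (by linarith)
  have hlow : lam * f u ^ 2 ≤ g u := by
    have : 0 ≤ -u * (1 + u) := mul_nonneg (by linarith [hu.2]) (by linarith [hu.1])
    nlinarith [sq_nonneg (f' u)]
  have hends : max (g (-1)) (g 0) = lam * max (f (-1) ^ 2) (f 0 ^ 2) := by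
    simp [g, mul_max_of_nonneg _ _ hlam.le]
  exact le_of_mul_le_mul_left (hends ▸ hlow.trans hgu) hlam

theorem Nat.sum_range_choose_mul_choose_mul_choose (m n j : ℕ) :
    ∑ k ∈ range (j + 1), m.choose k * (n.choose k * (n - k).choose (j - k)) =
      n.choose j * (m + j).choose j := by
  have hsplit : ∀ k ∈ range (j + 1),
      m.choose k * (n.choose k * (n - k).choose (j - k)) = n.choose j * (m.choose k * j.choose k) :=
    fun k hk ↦ by rw [← Nat.choose_mul (mem_range_succ_iff.1 hk), mul_left_comm]
  rw [sum_congr rfl hsplit, ← mul_sum, Nat.add_choose_eq, Nat.sum_antidiagonal_eq_sum_range_succ_mk]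
  congr 1
  refine sum_congr rfl fun k hk ↦ ?_
  rw [Nat.choose_symm (mem_range_succ_iff.1 hk)]

noncomputable def jacobiCoeff (n b j : ℕ) : ℝ := n.choose j * (n + b + j).choose j

/-- `jacobiShifted n b u = (-1) ^ n * P_n^{(b,0)} (-1 - 2 * u)`, with `P` the Jacobi polynomial. -/
noncomputable def jacobiShifted (n b : ℕ) (u : ℝ) : ℝ :=
  ∑ j ∈ range (n + 1), jacobiCoeff n b j * u ^ j

noncomputable def jacobiShiftedDeriv (n b : ℕ) (u : ℝ) : ℝ :=
  ∑ j ∈ range (n + 1), jacobiCoeff n b j * (j * u ^ (j - 1))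

noncomputable def jacobiShiftedDeriv2 (n b : ℕ) (u : ℝ) : ℝ :=
  ∑ j ∈ range (n + 1), jacobiCoeff n b j * (j * ((j - 1 : ℕ) * u ^ (j - 1 - 1)))

theorem hasDerivAt_jacobiShifted (n b : ℕ) (u : ℝ) :
    HasDerivAt (jacobiShifted n b) (jacobiShiftedDeriv n b u) u :=
  HasDerivAt.fun_sum fun j _ ↦ (hasDerivAt_pow j u).const_mul _

theorem hasDerivAt_jacobiShiftedDeriv (n b : ℕ) (u : ℝ) :
    HasDerivAt (jacobiShiftedDeriv n b) (jacobiShiftedDeriv2 n b u) u :=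
  HasDerivAt.fun_sum fun j _ ↦ ((hasDerivAt_pow (j - 1) u).const_mul _).const_mul _

theorem jacobiCoeff_succ (b : ℕ) {n j : ℕ} (hj : j ≤ n) :
    ((j : ℝ) + 1) ^ 2 * jacobiCoeff n b (j + 1) =
      ((n : ℝ) - j) * (n + b + j + 1) * jacobiCoeff n b j := by
  have hn : n.choose (j + 1) * (j + 1) = n.choose j * (n - j) := Nat.choose_succ_right_eq n j
  have hm : (n + b + j + 1) * (n + b + j).choose j = (n + b + (j + 1)).choose (j + 1) * (j + 1) :=
    Nat.add_one_mul_choose_eq _ _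
  have hnat : (j + 1) ^ 2 * (n.choose (j + 1) * (n + b + (j + 1)).choose (j + 1)) =
      (n - j) * (n + b + j + 1) * (n.choose j * (n + b + j).choose j) := by
    calc _ = (n.choose (j + 1) * (j + 1)) * ((n + b + (j + 1)).choose (j + 1) * (j + 1)) := by ring
      _ = _ := by rw [hn, ← hm]; ring
  rw [← Nat.cast_sub hj]
  unfold jacobiCoeff
  exact_mod_cast hnat

theorem jacobiShifted_ode (n b : ℕ) (u : ℝ) :
    u * (u + 1) * jacobiShiftedDeriv2 n b u + (1 + ((b : ℝ) + 2) * u) * jacobiShiftedDeriv n b u =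
      n * (n + b + 1) * jacobiShifted n b u := by
  have hterm : ∀ j : ℕ,
      u * (u + 1) * (jacobiCoeff n b j * (j * ((j - 1 : ℕ) * u ^ (j - 1 - 1)))) +
        (1 + ((b : ℝ) + 2) * u) * (jacobiCoeff n b j * (j * u ^ (j - 1))) =
      jacobiCoeff n b j * ((j * (j - 1) + (b + 2) * j) * u ^ j) +
        jacobiCoeff n b j * (j ^ 2 * u ^ (j - 1)) := by
    rintro (_ | _ | j)
    · simp
    · simp only [zero_add, Nat.cast_one, tsub_self, CharP.cast_eq_zero, pow_zero, mul_one, mul_zero,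
        sub_self, pow_one]
      ring
    · simp only [Nat.add_sub_cancel, pow_succ]
      push_cast
      ring
  have hshift : ∑ j ∈ range (n + 1), jacobiCoeff n b j * (j ^ 2 * u ^ (j - 1)) =
      ∑ j ∈ range (n + 1), ((n : ℝ) - j) * (n + b + j + 1) * jacobiCoeff n b j * u ^ j := by
    rw [sum_range_succ', sum_range_succ]
    simp only [CharP.cast_eq_zero, ne_eq, OfNat.ofNat_ne_zero, not_false_eq_true, zero_pow,
      zero_mul, mul_zero, add_zero, sub_self, Nat.cast_add, Nat.cast_one, Nat.add_sub_cancel]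
    refine sum_congr rfl fun j hj ↦ ?_
    rw [← jacobiCoeff_succ b (mem_range.1 hj).le]
    ring
  simp only [jacobiShifted, jacobiShiftedDeriv, jacobiShiftedDeriv2, mul_sum, ← sum_add_distrib]
  rw [sum_congr rfl fun j _ ↦ hterm j, sum_add_distrib, hshift, ← sum_add_distrib]
  refine sum_congr rfl fun j _ ↦ ?_
  ring

theorem jacobiShifted_eq_sum (n b : ℕ) (u : ℝ) :
    jacobiShifted n b u =
      ∑ k ∈ range (n + 1), ((n + b).choose k : ℝ) * n.choose k * u ^ k * (1 + u) ^ (n - k) := by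
  set f : ℕ → ℕ → ℝ := fun k i ↦
    ((n + b).choose k * (n.choose k * (n - k).choose i) : ℕ) * u ^ (k + i)
  have hexpand : ∀ k ∈ range (n + 1),
      ((n + b).choose k : ℝ) * n.choose k * u ^ k * (1 + u) ^ (n - k) =
        ∑ i ∈ range (n + 1 - k), f k i := by
    intro k hk
    rw [Nat.sub_add_comm (mem_range_succ_iff.1 hk), add_comm 1 u, add_pow, mul_sum]
    refine sum_congr rfl fun i _ ↦ ?_
    simp only [f, one_pow, mul_one, pow_add]
    push_cast
    ring
  rw [sum_congr rfl hexpand, ← sum_range_diag_flip]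
  refine sum_congr rfl fun j _ ↦ ?_
  have hpow : ∀ k ∈ range (j + 1), f k (j - k) =
      ((n + b).choose k * (n.choose k * (n - k).choose (j - k)) : ℕ) * u ^ j :=
    fun k hk ↦ by simp only [f, Nat.add_sub_cancel' (mem_range_succ_iff.1 hk)]
  rw [sum_congr rfl hpow, ← sum_mul, ← Nat.cast_sum, Nat.sum_range_choose_mul_choose_mul_choose,
    jacobiCoeff]
  push_cast
  ring

theorem jacobiShifted_zero (n b : ℕ) : jacobiShifted n b 0 = 1 := by
  simp [jacobiShifted, jacobiCoeff, sum_range_succ']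

theorem jacobiShifted_neg_one (n b : ℕ) :
    jacobiShifted n b (-1) = (-1) ^ n * (n + b).choose n := by
  rw [jacobiShifted_eq_sum, sum_eq_single_of_mem n (self_mem_range_succ n)]
  · simp [mul_comm]
  · intro k hk hkn
    have : n - k ≠ 0 := by have := mem_range.1 hk; omega
    simp [this]

theorem abs_jacobiShifted_le (n b : ℕ) {u : ℝ} (hu : u ∈ Set.Icc (-1) 0) :
    |jacobiShifted n b u| ≤ (n + b).choose n := by
  rcases n.eq_zero_or_pos with rfl | hn
  · simp [jacobiShifted, jacobiCoeff]
  have hC : (1 : ℝ) ≤ (n + b).choose n := by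
    exact_mod_cast Nat.choose_pos (Nat.le_add_right n b)
  have hsq := sq_le_max_sq_of_jacobi_ode (hasDerivAt_jacobiShifted n b)
    (hasDerivAt_jacobiShiftedDeriv n b) (jacobiShifted_ode n b)
    (neg_one_lt_zero.trans_le b.cast_nonneg) (by positivity) hu
  rw [jacobiShifted_neg_one, jacobiShifted_zero, mul_pow, ← pow_mul, pow_mul', neg_one_sq,
    one_pow, one_mul, one_pow, max_eq_left (one_le_pow₀ hC)] at hsq
  exact abs_le_of_sq_le_sq hsq (by positivity)

theorem zernikeR_eq_mul_jacobiShifted (q N n : ℕ) (x : ℝ) :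
    zernikeR q N n x = x ^ N * jacobiShifted n (N + q) (x ^ 2 - 1) := by
  rw [zernikeR, jacobiShifted_eq_sum, ← add_assoc]
  congr 1
  refine sum_congr rfl fun k _ ↦ ?_
  rw [show 1 + (x ^ 2 - 1) = x ^ 2 by ring, ← pow_mul, show x ^ 2 - 1 = -(1 - x ^ 2) by ring,
    neg_pow (1 - x ^ 2)]
  ring

theorem zernike_radial_bound (q N n : ℕ) (x : ℝ) (hx : x ∈ Set.Icc (0:ℝ) 1) :
    |zernikeR q N n x| ≤ (Nat.choose (n + N + q) n : ℝ) := by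
  obtain ⟨hx0, hx1⟩ := hx
  have hu : x ^ 2 - 1 ∈ Set.Icc (-1) 0 := ⟨by nlinarith, by nlinarith⟩
  rw [zernikeR_eq_mul_jacobiShifted, abs_mul, abs_of_nonneg (pow_nonneg hx0 N), add_assoc]
  exact (mul_le_of_le_one_left (abs_nonneg _) (pow_le_one₀ hx0 hx1)).trans
    (abs_jacobiShifted_le n (N + q) hu)
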